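/- Define P_V^i := F^{i-1} P^i (F^i)^{-1} where F^i = (I − P^{i+1}S^i)^{-1}. Then d_V^{i-1}P_V^i + P_V^{i+1}d_V^i = I for i > 0 and d_V^0 P_V^1 d_V^0 = d_V^0. -/
import Mathlib


/-- Define `P_V^i := F^{i-1} P^i (F^i)^{-1}` where `F^i = (I − P^{i+1}S^i)^{-1}`.
Then `d_V^{i-1}P_V^i + P_V^{i+1}d_V^i = I` in positive degrees and
`d_V^0 P_V^1 d_V^0 = d_V^0`. -/
theorem twisted_poincare
    (K : Type*) [Field K] (Y : ℕ → Type*)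
    [∀ i, AddCommGroup (Y i)] [∀ i, Module K (Y i)]
    (d S : ∀ i, Y i →ₗ[K] Y (i + 1))
    (P : ∀ i, Y (i + 1) →ₗ[K] Y i)
    (hd : ∀ i (u : Y i), d (i + 1) (d i u) = 0)
    (hH : ∀ i (u : Y (i + 1)), d i (P i u) + P (i + 1) (d (i + 1) u) = u)
    (hH0 : ∀ u : Y 0, d 0 (P 0 (d 0 u)) = d 0 u)
    (hS2 : ∀ i (u : Y i), S (i + 1) (S i u) = 0)
    (hdS : ∀ i (u : Y i), d (i + 1) (S i u) = - S (i + 1) (d i u))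
    (F : ∀ i, Y i →ₗ[K] Y i)
    (hF1 : ∀ i (u : Y i), F i (u - P i (S i u)) = u)
    (hF2 : ∀ i (u : Y i), F i u - P i (S i (F i u)) = u)
    (PV : ∀ i, Y (i + 1) →ₗ[K] Y i)
    (hPV : ∀ i (u : Y (i + 1)), PV i u = F i (P i (u - P (i + 1) (S (i + 1) u)))) :
    (∀ i (u : Y (i + 1)),
        (d i - S i) (PV i u) + PV (i + 1) ((d (i + 1) - S (i + 1)) u) = u) ∧
    (∀ u : Y 0, (d 0 - S 0) (PV 0 ((d 0 - S 0) u)) = (d 0 - S 0) u) := by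
  -- intertwining: (I - PS)(d - S) = d (I - PS)
  have inter : ∀ i (u : Y i),
      (d i u - S i u) - P (i+1) (S (i+1) (d i u - S i u)) = d i (u - P i (S i u)) := by
    intro i u
    have h4 : S (i+1) (d i u) = - d (i+1) (S i u) := by rw [hdS, neg_neg]
    have h5 : P (i+1) (d (i+1) (S i u)) = S i u - d i (P i (S i u)) :=
      eq_sub_of_add_eq' (hH i (S i u))
    rw [map_sub (S (i+1)), hS2, sub_zero, h4, map_neg, h5, map_sub (d i)]
    abel
  -- F intertwines d and d_V
  have dVF : ∀ i (v : Y i), d i (F i v) - S i (F i v) = F (i+1) (d i v) := by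
    intro i v
    have h := inter i (F i v)
    rw [hF2] at h
    conv_lhs => rw [← hF1 (i+1) (d i (F i v) - S i (F i v))]
    rw [h]
  constructor
  · intro i u
    simp only [LinearMap.sub_apply, hPV]
    rw [inter (i+1) u, dVF]
    rw [← map_add (F (i+1)), hH i (u - P (i+1) (S (i+1) u)), hF1]
  · intro u
    simp only [LinearMap.sub_apply, hPV]
    rw [inter 0 u, dVF, hH0]
    rw [← inter 0 u, hF1]
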